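/- arXiv:2604.24660 — 3 statements merged into one kernel-verified Lean document; each statement's English description precedes it below -/
import Mathlib

section
/- Parametrization invariance: Let T : H → G be bounded linear between Hilbert spaces, r ∈ G, a ∈ H. Suppose h, h′ ∈ H both minimize ‖T u − r‖² over u ∈ H, and g, g′ ∈ G both minimize ‖T* v − a‖² over v ∈ G. Then ⟨T h, g⟩ = ⟨T h′, g′⟩ (equivalently ⟨h, T* g⟩ = ⟨h′, T* g′⟩). -/
open ContinuousLinearMap RealInnerProductSpace

/-
Both pairings only depend on `T h` and `T* g`, and these are unique: `T h` is a point of the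
subspace `range T` nearest to `r`, and in a strictly convex space (in particular a Hilbert
space) a convex set has at most one nearest point to a given point, since the midpoint of two
distinct nearest points would be strictly closer. Then
`⟪T h, g⟫ = ⟪h, T* g⟫ = ⟪h, T* g'⟫ = ⟪T h, g'⟫ = ⟪T h', g'⟫`.
-/

theorem Convex.eq_of_forall_norm_sub_le {E : Type*} [NormedAddCommGroup E] [NormedSpace ℝ E]
    [StrictConvexSpace ℝ E] {K : Set E} (hK : Convex ℝ K) {r x y : E} (hx : x ∈ K) (hy : y ∈ K)
    (hx_min : ∀ z ∈ K, ‖x - r‖ ≤ ‖z - r‖) (hy_min : ∀ z ∈ K, ‖y - r‖ ≤ ‖z - r‖) : x = y := by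
  have hdist : ‖x - r‖ = ‖y - r‖ := le_antisymm (hx_min y hy) (hy_min x hx)
  have hmid : (1 / 2 : ℝ) • ((x - r) + (y - r)) = midpoint ℝ x y - r := by
    rw [midpoint_eq_smul_add, invOf_eq_inv, one_div]
    module
  have hmid_far : ¬‖midpoint ℝ x y - r‖ < ‖x - r‖ :=
    not_lt.mpr (hx_min _ (hK.midpoint_mem hx hy))
  rw [← hmid, norm_midpoint_lt_iff hdist, not_not] at hmid_far
  exact sub_left_injective hmid_far

def IsLeastSquaresSolution {E F 𝓕 : Type*} [Norm F] [Sub F] [FunLike 𝓕 E F]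
    (f : 𝓕) (r : F) (u : E) : Prop :=
  ∀ v : E, ‖f u - r‖ ≤ ‖f v - r‖

theorem IsLeastSquaresSolution.apply_eq {E F 𝓕 : Type*} [AddCommGroup E] [Module ℝ E]
    [NormedAddCommGroup F] [NormedSpace ℝ F] [StrictConvexSpace ℝ F]
    [FunLike 𝓕 E F] [LinearMapClass 𝓕 ℝ E F] {f : 𝓕} {r : F} {u u' : E}
    (hu : IsLeastSquaresSolution f r u) (hu' : IsLeastSquaresSolution f r u') : f u = f u' := by
  have hconvex : Convex ℝ (Set.range f) := by
    simpa only [LinearMap.coe_range, LinearMap.coe_coe] using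
      (LinearMap.range (f : E →ₗ[ℝ] F)).convex
  refine hconvex.eq_of_forall_norm_sub_le (r := r)
    (Set.mem_range_self u) (Set.mem_range_self u') ?_ ?_
  · rintro _ ⟨v, rfl⟩
    exact hu v
  · rintro _ ⟨v, rfl⟩
    exact hu' v

/-- Parametrization invariance: the pairing `⟪T h, g⟫` takes the same value for all
least-squares solutions `h` of `T h ≈ r` and `g` of `T* g ≈ a`. -/
theorem parametrization_invariance
    {H G : Type*} [NormedAddCommGroup H] [InnerProductSpace ℝ H] [CompleteSpace H]
    [NormedAddCommGroup G] [InnerProductSpace ℝ G] [CompleteSpace G]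
    (T : H →L[ℝ] G) (r : G) (a : H) (h h' : H) (g g' : G)
    (hh : ∀ u : H, ‖T h - r‖ ≤ ‖T u - r‖)
    (hh' : ∀ u : H, ‖T h' - r‖ ≤ ‖T u - r‖)
    (hg : ∀ v : G, ‖adjoint T g - a‖ ≤ ‖adjoint T v - a‖)
    (hg' : ∀ v : G, ‖adjoint T g' - a‖ ≤ ‖adjoint T v - a‖) :
    ⟪T h, g⟫ = ⟪T h', g'⟫ ∧ ⟪h, adjoint T g⟫ = ⟪h', adjoint T g'⟫ := by
  have hT : T h = T h' := IsLeastSquaresSolution.apply_eq hh hh'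
  have hT_adj : adjoint T g = adjoint T g' := IsLeastSquaresSolution.apply_eq hg hg'
  have hpair : ⟪T h, g⟫ = ⟪T h', g'⟫ := by
    rw [← adjoint_inner_right, hT_adj, adjoint_inner_right, hT]
  refine ⟨hpair, ?_⟩
  simpa only [adjoint_inner_right] using hpair
end

section
/- Tikhonov bias bound under source condition: Let T : H → G be bounded linear, h† = (T*T)^{β/2} w for some w ∈ H and β > 0, with h† ∈ ker(T)⊥. For λ ∈ (0,1], let h^λ = (T*T + λI)^{-1} T*T h†. Then there is a constant C (depending on β and ‖w‖) such that ‖h^λ − h†‖² ≤ C λ^{min(β,2)} and ‖T(h^λ − h†)‖² ≤ C λ^{min(β+1,2)}. -/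
set_option maxHeartbeats 1000000

open ContinuousLinearMap

section Aux

open scoped InnerProductSpace

/-- Key scalar inequality. -/
lemma tik_scalar {γ M lam x : ℝ} (hγ : 0 < γ) (hx : 0 ≤ x) (hxM : x ≤ M)
    (hl0 : 0 < lam) (hl1 : lam ≤ 1) :
    lam * x ^ (γ / 2) / (x + lam) ≤ (max 1 M) ^ (γ / 2) * lam ^ (min γ 2 / 2) := by
  have hden : 0 < x + lam := by linarith
  have hM1 : (1 : ℝ) ≤ max 1 M := le_max_left _ _
  have hM0 : (0 : ℝ) ≤ max 1 M := by linarith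
  rcases le_or_gt γ 2 with hγ2 | hγ2
  · -- min γ 2 = γ
    rw [min_eq_left hγ2]
    have hw1 : (0:ℝ) ≤ 1 - γ / 2 := by linarith
    have hw2 : (0:ℝ) ≤ γ / 2 := by linarith
    have hkey : lam ^ (1 - γ / 2) * x ^ (γ / 2) ≤ x + lam := by
      have := Real.geom_mean_le_arith_mean2_weighted hw1 hw2 hl0.le hx (by ring)
      have h1 : (1 - γ / 2) * lam ≤ lam := by nlinarith
      have h2 : γ / 2 * x ≤ x := by nlinarith
      linarith
    have hmul : lam * x ^ (γ / 2) ≤ lam ^ (γ / 2) * (x + lam) := by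
      calc lam * x ^ (γ / 2) = lam ^ (γ / 2) * (lam ^ (1 - γ / 2) * x ^ (γ / 2)) := by
            rw [← mul_assoc, ← Real.rpow_add hl0]; norm_num
        _ ≤ lam ^ (γ / 2) * (x + lam) := by
            have : (0:ℝ) ≤ lam ^ (γ / 2) := (Real.rpow_pos_of_pos hl0 _).le
            exact mul_le_mul_of_nonneg_left hkey this
    calc lam * x ^ (γ / 2) / (x + lam) ≤ lam ^ (γ / 2) := by
          rw [div_le_iff₀ hden]; linarith
      _ ≤ (max 1 M) ^ (γ / 2) * lam ^ (γ / 2) := by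
          nlinarith [Real.one_le_rpow hM1 hw2, (Real.rpow_pos_of_pos hl0 (γ/2)).le]
  · -- min γ 2 = 2
    rw [min_eq_right hγ2.le]
    norm_num
    rcases eq_or_lt_of_le hx with h0 | hxpos
    · rw [← h0, Real.zero_rpow (by positivity)]
      have : (0:ℝ) ≤ (max 1 M) ^ (γ / 2) * lam := by positivity
      simpa using this
    · have h1 : lam * x ^ (γ / 2) / (x + lam) ≤ lam * x ^ (γ / 2) / x :=
        div_le_div_of_nonneg_left (by positivity) hxpos (by linarith)
      have h2 : lam * x ^ (γ / 2) / x = lam * x ^ (γ / 2 - 1) := by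
        rw [Real.rpow_sub hxpos, Real.rpow_one]; ring
      have h3 : x ^ (γ / 2 - 1) ≤ (max 1 M) ^ (γ / 2) := by
        calc x ^ (γ / 2 - 1) ≤ (max 1 M) ^ (γ / 2 - 1) :=
              Real.rpow_le_rpow hx (hxM.trans (le_max_right _ _)) (by linarith)
          _ ≤ (max 1 M) ^ (γ / 2) :=
              Real.rpow_le_rpow_of_exponent_le hM1 (by linarith)
      calc lam * x ^ (γ / 2) / (x + lam) ≤ lam * x ^ (γ / 2 - 1) := by rw [← h2]; exact h1
        _ ≤ lam * (max 1 M) ^ (γ / 2) := by nlinarith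
        _ = (max 1 M) ^ (γ / 2) * lam := by ring

/-- Squared form. -/
lemma tik_scalar_sq {γ M lam x : ℝ} (hγ : 0 < γ) (hx : 0 ≤ x) (hxM : x ≤ M)
    (hl0 : 0 < lam) (hl1 : lam ≤ 1) :
    (lam * x ^ (γ / 2) / (x + lam)) ^ 2 ≤ (max 1 M) ^ γ * lam ^ (min γ 2) := by
  have h := tik_scalar hγ hx hxM hl0 hl1
  have hLHS : 0 ≤ lam * x ^ (γ / 2) / (x + lam) := by positivity
  have hsq : (lam * x ^ (γ / 2) / (x + lam)) ^ 2
      ≤ ((max 1 M) ^ (γ / 2) * lam ^ (min γ 2 / 2)) ^ 2 := by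
    exact pow_le_pow_left₀ hLHS h 2
  have e1 : ((max 1 M) ^ (γ / 2) : ℝ) ^ 2 = (max 1 M) ^ γ := by
    rw [← Real.rpow_natCast ((max 1 M) ^ (γ / 2)) 2, ← Real.rpow_mul (by positivity)]
    norm_num
  have e2 : (lam ^ (min γ 2 / 2) : ℝ) ^ 2 = lam ^ (min γ 2) := by
    rw [← Real.rpow_natCast (lam ^ (min γ 2 / 2)) 2, ← Real.rpow_mul hl0.le]
    norm_num
  calc (lam * x ^ (γ / 2) / (x + lam)) ^ 2
      ≤ ((max 1 M) ^ (γ / 2) * lam ^ (min γ 2 / 2)) ^ 2 := hsq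
    _ = (max 1 M) ^ γ * lam ^ (min γ 2) := by rw [mul_pow, e1, e2]

end Aux

open scoped InnerProductSpace

/-- Tikhonov bias bound under a `β`-source condition: if `h† = (T*T)^{β/2} w` with
`h† ∈ ker(T)ᗮ`, and for each `λ ∈ (0,1]` the regularized solution `h^λ` satisfies
`(T*T + λI) h^λ = T*T h†`, then `‖h^λ − h†‖² ≤ C λ^{min(β,2)}` and
`‖T(h^λ − h†)‖² ≤ C λ^{min(β+1,2)}` for a constant `C`. -/
theorem tikhonov_bias_bound
    {H G : Type*} [NormedAddCommGroup H] [InnerProductSpace ℂ H] [CompleteSpace H]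
    [NormedAddCommGroup G] [InnerProductSpace ℂ G] [CompleteSpace G]
    (T : H →L[ℂ] G) (β : ℝ) (hβ : 0 < β) (w hdag : H) (hl : ℝ → H)
    (hsource : hdag = cfc (fun x : ℝ => x ^ (β / 2)) ((adjoint T) ∘L T) w)
    (hdag_mem : hdag ∈ (LinearMap.ker (T : H →ₗ[ℂ] G))ᗮ)
    (hl_eq : ∀ lam : ℝ, 0 < lam → lam ≤ 1 →
      ((adjoint T) ∘L T) (hl lam) + lam • hl lam = ((adjoint T) ∘L T) hdag) :
    ∃ C : ℝ, ∀ lam : ℝ, 0 < lam → lam ≤ 1 →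
      ‖hl lam - hdag‖ ^ 2 ≤ C * lam ^ (min β 2) ∧
      ‖T (hl lam - hdag)‖ ^ 2 ≤ C * lam ^ (min (β + 1) 2) := by
  classical
  set A : H →L[ℂ] H := (adjoint T) ∘L T with hAdef
  have hAsa : IsSelfAdjoint A := by
    rw [isSelfAdjoint_iff']
    simp [hAdef, adjoint_comp]
  have hA0 : (0 : H →L[ℂ] H) ≤ A := by
    rw [nonneg_iff_isPositive]
    have h := (isPositive_one (E := G) (𝕜 := ℂ)).adjoint_conj T
    rw [ContinuousLinearMap.one_def, ContinuousLinearMap.id_comp] at h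
    exact h
  set M : ℝ := ‖A‖ * ‖(1 : H →L[ℂ] H)‖ with hMdef
  have hspec : ∀ x ∈ spectrum ℝ A, 0 ≤ x ∧ x ≤ M := by
    intro x hx
    refine ⟨spectrum_nonneg_of_nonneg hA0 hx, ?_⟩
    have := spectrum.subset_closedBall_norm_mul A hx
    simp only [Metric.mem_closedBall, dist_zero_right, Real.norm_eq_abs] at this
    exact (le_abs_self x).trans this
  have hcont_f : Continuous fun x : ℝ => x ^ (β / 2) :=
    continuous_iff_continuousAt.mpr fun x =>
      Real.continuousAt_rpow_const x _ (Or.inr (by positivity))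
  refine ⟨‖w‖ ^ 2 * ((max 1 M) ^ β + (max 1 M) ^ (β + 1)), ?_⟩
  intro lam hl0 hl1
  set g : ℝ → ℝ := fun x => lam * x ^ (β / 2) / (x + lam) with hgdef
  have hgcont : ContinuousOn g (spectrum ℝ A) := by
    apply ContinuousOn.div
    · exact (continuous_const.mul hcont_f).continuousOn
    · fun_prop
    · intro x hx
      have := (hspec x hx).1
      positivity
  -- the identity u = cfc g A w
  have hplus : cfc (fun x : ℝ => x + lam) A = A + lam • 1 := by
    rw [cfc_add (a := A) _ _ (by fun_prop) (by fun_prop), cfc_id' ℝ A, cfc_const lam A]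
    simp [Algebra.algebraMap_eq_smul_one]
  have hprod : (A + lam • 1) * cfc g A = cfc (fun x : ℝ => lam * x ^ (β / 2)) A := by
    rw [← hplus, ← cfc_mul _ _ A (by fun_prop) hgcont]
    apply cfc_congr
    intro x hx
    have hxpos : 0 < x + lam := by have := (hspec x hx).1; linarith
    field_simp [hgdef]
    simp only [hgdef]; field_simp
  have h2 : (A + lam • 1) (cfc g A w) = lam • hdag := by
    have e1 : (A + lam • 1) (cfc g A w) = ((A + lam • 1) * cfc g A) w :=
      (ContinuousLinearMap.mul_apply _ _ _).symm
    have e2 : cfc (fun x : ℝ => lam * x ^ (β / 2)) A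
        = lam • cfc (fun x : ℝ => x ^ (β / 2)) A :=
      cfc_const_mul lam _ A hcont_f.continuousOn
    rw [e1, hprod, e2, ContinuousLinearMap.smul_apply, ← hsource]
  have h1 : (A + lam • 1) (hdag - hl lam) = lam • hdag := by
    have := hl_eq lam hl0 hl1
    simp only [ContinuousLinearMap.add_apply, ContinuousLinearMap.smul_apply,
      ContinuousLinearMap.one_apply, map_sub, smul_sub] at *
    rw [show A (hl lam) = A hdag - lam • hl lam by
      rw [← this]; abel]
    abel
  have hinj : ∀ v : H, (A + lam • 1) v = 0 → v = 0 := by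
    intro v hv
    have hre : RCLike.re (⟪(A + lam • 1) v, v⟫_ℂ) = ‖T v‖ ^ 2 + lam * ‖v‖ ^ 2 := by
      have hAvv : ⟪A v, v⟫_ℂ = ⟪T v, T v⟫_ℂ := by
        rw [hAdef]
        exact adjoint_inner_left T v (T v)
      have hsmul : ((lam • v : H)) = ((lam : ℂ) • v) := by
        simp [Complex.coe_smul]
      simp only [ContinuousLinearMap.add_apply, ContinuousLinearMap.smul_apply,
        ContinuousLinearMap.one_apply, inner_add_left, hsmul, inner_smul_left, hAvv,
        map_add]
      rw [inner_self_eq_norm_sq (𝕜 := ℂ) (T v), inner_self_eq_norm_sq_to_K (𝕜 := ℂ) v,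
        Complex.conj_ofReal]
      simp [Complex.ofReal_pow]
      exact Or.inl (by rw [← Complex.ofReal_pow]; exact Complex.ofReal_re _)
    rw [hv] at hre
    simp only [inner_zero_left, map_zero] at hre
    have hv2 : ‖v‖ ^ 2 ≤ 0 := by nlinarith [sq_nonneg ‖T v‖, sq_nonneg ‖v‖]
    have : ‖v‖ = 0 := by nlinarith [norm_nonneg v]
    exact norm_eq_zero.mp this
  have hu : hdag - hl lam = cfc g A w := by
    have := hinj (hdag - hl lam - cfc g A w) (by rw [map_sub, h1, h2, sub_self])
    exact sub_eq_zero.mp this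
  -- generic bound on re ⟪cfc m A w, w⟫
  have key : ∀ (m : ℝ → ℝ) (c : ℝ), 0 ≤ c → (∀ x ∈ spectrum ℝ A, |m x| ≤ c) →
      RCLike.re (⟪cfc m A w, w⟫_ℂ) ≤ c * ‖w‖ ^ 2 := by
    intro m c hc hm
    calc RCLike.re (⟪cfc m A w, w⟫_ℂ) ≤ ‖(⟪cfc m A w, w⟫_ℂ)‖ := RCLike.re_le_norm _
      _ ≤ ‖cfc m A w‖ * ‖w‖ := norm_inner_le_norm _ _
      _ ≤ (c * ‖w‖) * ‖w‖ := by
          gcongr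
          calc ‖cfc m A w‖ ≤ ‖cfc m A‖ * ‖w‖ := le_opNorm _ w
            _ ≤ c * ‖w‖ := by
                gcongr
                exact norm_cfc_le hc (fun x hx => by simpa using hm x hx)
      _ = c * ‖w‖ ^ 2 := by ring
  have hgsa : IsSelfAdjoint (cfc g A) := cfc_predicate g A
  constructor
  · -- first bound
    have hnorm : ‖hl lam - hdag‖ ^ 2 = RCLike.re (⟪cfc (fun x => g x * g x) A w, w⟫_ℂ) := by
      rw [← norm_neg, neg_sub, hu, ← inner_self_eq_norm_sq (𝕜 := ℂ)]
      congr 1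
      rw [cfc_mul _ _ A hgcont hgcont]
      calc ⟪cfc g A w, cfc g A w⟫_ℂ = ⟪adjoint (cfc g A) (cfc g A w), w⟫_ℂ := by
            rw [adjoint_inner_left]
        _ = ⟪(cfc g A * cfc g A) w, w⟫_ℂ := by
            rw [hgsa.adjoint_eq, ContinuousLinearMap.mul_apply]
    rw [hnorm]
    have hb : ∀ x ∈ spectrum ℝ A, |g x * g x| ≤ (max 1 M) ^ β * lam ^ (min β 2) := by
      intro x hx
      obtain ⟨hx0, hxM⟩ := hspec x hx
      have := tik_scalar_sq (γ := β) (M := M) hβ hx0 hxM hl0 hl1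
      rw [show g x * g x = g x ^ 2 by ring, abs_of_nonneg (sq_nonneg _)]
      exact this
    have := key _ _ (by positivity) hb
    calc RCLike.re (⟪cfc (fun x => g x * g x) A w, w⟫_ℂ)
        ≤ (max 1 M) ^ β * lam ^ (min β 2) * ‖w‖ ^ 2 := this
      _ ≤ ‖w‖ ^ 2 * ((max 1 M) ^ β + (max 1 M) ^ (β + 1)) * lam ^ (min β 2) := by
          have h1 : (0:ℝ) ≤ (max 1 M) ^ (β + 1) := by positivity
          have h2 : (0:ℝ) ≤ lam ^ (min β 2) := by positivity
          nlinarith [mul_nonneg (mul_nonneg h1 h2) (sq_nonneg ‖w‖)]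
  · -- second bound
    have hTnorm : ‖T (hl lam - hdag)‖ ^ 2
        = RCLike.re (⟪cfc (fun x => g x * (x * g x)) A w, w⟫_ℂ) := by
      have hTu : ‖T (hl lam - hdag)‖ ^ 2 = RCLike.re (⟪A (hdag - hl lam), hdag - hl lam⟫_ℂ) := by
        rw [hAdef]
        have : ⟪(adjoint T ∘L T) (hdag - hl lam), hdag - hl lam⟫_ℂ
            = ⟪T (hdag - hl lam), T (hdag - hl lam)⟫_ℂ := adjoint_inner_left T _ _
        rw [this, inner_self_eq_norm_sq (𝕜 := ℂ), ← norm_neg, map_sub, neg_sub, ← map_sub]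
      rw [hTu, hu]
      have hAc : A (cfc g A w) = cfc (fun x => x * g x) A w := by
        have hmulA : A * cfc g A = cfc (fun x => x * g x) A := by
          nth_rewrite 1 [← cfc_id' ℝ A hAsa]
          rw [← cfc_mul _ _ A (by fun_prop) hgcont]
        calc A (cfc g A w) = (A * cfc g A) w := (ContinuousLinearMap.mul_apply _ _ _).symm
          _ = cfc (fun x => x * g x) A w := by rw [hmulA]
      rw [hAc]
      congr 1
      calc ⟪cfc (fun x => x * g x) A w, cfc g A w⟫_ℂ
          = ⟪adjoint (cfc g A) (cfc (fun x => x * g x) A w), w⟫_ℂ := by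
            rw [adjoint_inner_left]
        _ = ⟪(cfc g A * cfc (fun x => x * g x) A) w, w⟫_ℂ := by
            rw [hgsa.adjoint_eq, ContinuousLinearMap.mul_apply]
        _ = ⟪cfc (fun x => g x * (x * g x)) A w, w⟫_ℂ := by
            rw [cfc_mul _ _ A hgcont (by exact ContinuousOn.mul (by fun_prop) hgcont)]
    rw [hTnorm]
    have hb : ∀ x ∈ spectrum ℝ A, |g x * (x * g x)| ≤ (max 1 M) ^ (β + 1) * lam ^ (min (β + 1) 2) := by
      intro x hx
      obtain ⟨hx0, hxM⟩ := hspec x hx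
      have hkey := tik_scalar_sq (γ := β + 1) (M := M) (by linarith) hx0 hxM hl0 hl1
      have hval : g x * (x * g x) = (lam * x ^ ((β + 1) / 2) / (x + lam)) ^ 2 := by
        rcases eq_or_lt_of_le hx0 with h0 | hxpos
        · rw [hgdef]
          simp only [← h0]
          rw [Real.zero_rpow (by positivity), Real.zero_rpow (by positivity)]
          ring
        · have hx1 : x ^ ((β + 1) / 2) = x ^ (β / 2) * x ^ ((1:ℝ) / 2) := by
            rw [← Real.rpow_add hxpos]; ring_nf
          have hx2 : x ^ ((1:ℝ) / 2) * x ^ ((1:ℝ) / 2) = x := by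
            rw [← Real.rpow_add hxpos]; norm_num
          rw [hgdef]
          field_simp
          have hx3 : (x ^ ((1:ℝ) / 2)) ^ 2 = x := by rw [pow_two]; exact hx2
          rw [hx1, mul_pow, hx3]
      have habs : |g x * (x * g x)| = g x * (x * g x) := by
        apply abs_of_nonneg
        rw [hval]; positivity
      rw [habs, hval]
      exact hkey
    have := key _ _ (by positivity) hb
    calc RCLike.re (⟪cfc (fun x => g x * (x * g x)) A w, w⟫_ℂ)
        ≤ (max 1 M) ^ (β + 1) * lam ^ (min (β + 1) 2) * ‖w‖ ^ 2 := this
      _ ≤ ‖w‖ ^ 2 * ((max 1 M) ^ β + (max 1 M) ^ (β + 1)) * lam ^ (min (β + 1) 2) := by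
          have h1 : (0:ℝ) ≤ (max 1 M) ^ β := by positivity
          have h2 : (0:ℝ) ≤ lam ^ (min (β + 1) 2) := by positivity
          nlinarith [mul_nonneg (mul_nonneg h1 h2) (sq_nonneg ‖w‖)]
end

section
/- Bias cancellation for the debiased score (abstract form): Let T : H → G be bounded linear with adjoint T*. Let h_P, α ∈ H, g_P, r, ξ^h, ξ^α ∈ G, and α_P ∈ H with T*T α_P = a∥ where a∥ = T* g_P. Suppose T h_P = r∥ where r∥ is the orthogonal projection of r_P ∈ G onto closure(range(T)). Then ⟨h − h_P, T*T α_P⟩ − ⟨ξ^α, T h − r_P⟩ − ⟨T α − ξ^α, ξ^h − r⟩ = ⟨T(h − h_P), T(α_P − α)⟩ + ⟨T h − ξ^h, T α − ξ^α⟩ + ⟨T α − ξ^α, r − r_P⟩ for every h ∈ H. -/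
open ContinuousLinearMap RealInnerProductSpace

/-- Bias cancellation for the debiased score (abstract form): algebraic expansion of the
middle term in the bias characterization of the doubly-debiased estimator. -/
theorem debiased_score_expansion
    {H G : Type*} [NormedAddCommGroup H] [InnerProductSpace ℝ H] [CompleteSpace H]
    [NormedAddCommGroup G] [InnerProductSpace ℝ G] [CompleteSpace G]
    (T : H →L[ℝ] G) (hP α αP : H) (gP r rP rpar ξh ξα : G)
    (hαP : ((adjoint T) ∘L T) αP = adjoint T gP)
    (hrpar_mem : rpar ∈ (LinearMap.range (T : H →ₗ[ℝ] G)).topologicalClosure)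
    (hrpar_proj : rP - rpar ∈ ((LinearMap.range (T : H →ₗ[ℝ] G)).topologicalClosure : Submodule ℝ G)ᗮ)
    (hhP : T hP = rpar) :
    ∀ h : H,
      ⟪h - hP, ((adjoint T) ∘L T) αP⟫ - ⟪ξα, T h - rP⟫ - ⟪T α - ξα, ξh - r⟫ =
        ⟪T (h - hP), T (αP - α)⟫ + ⟪T h - ξh, T α - ξα⟫ + ⟪T α - ξα, r - rP⟫ := by
  intro h
  have hmem : T α ∈ (LinearMap.range (T : H →ₗ[ℝ] G)).topologicalClosure :=
    Submodule.le_topologicalClosure _ ⟨α, rfl⟩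
  have key : ⟪T α, rP - rpar⟫ = 0 := hrpar_proj (T α) hmem
  have hadj : ⟪h - hP, ((adjoint T) ∘L T) αP⟫ = ⟪T (h - hP), T αP⟫ := by
    rw [ContinuousLinearMap.comp_apply, ContinuousLinearMap.adjoint_inner_right]
  rw [hadj]
  simp only [map_sub, inner_sub_left, inner_sub_right, hhP] at *
  have c1 : ⟪rpar, T α⟫ = ⟪T α, rpar⟫ := real_inner_comm _ _
  have c2 : ⟪ξα, T h⟫ = ⟪T h, ξα⟫ := real_inner_comm _ _
  have c3 : ⟪T α, ξh⟫ = ⟪ξh, T α⟫ := real_inner_comm _ _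
  have c4 : ⟪ξα, ξh⟫ = ⟪ξh, ξα⟫ := real_inner_comm _ _
  have c5 : ⟪T h, T α⟫ = ⟪T α, T h⟫ := real_inner_comm _ _
  linarith
end
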